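/- arXiv:0707.1074 — 2 statements merged into one kernel-verified Lean document; each statement's English description precedes it below -/
import Mathlib

section
/- The series product of open quantum systems is associative: for any three n-channel open quantum systems G₁ = (S₁, L₁, H₁), G₂ = (S₂, L₂, H₂), G₃ = (S₃, L₃, H₃) (with unitary scattering matrices), one has (G₃ ◁ G₂) ◁ G₁ = G₃ ◁ (G₂ ◁ G₁), componentwise as triples. -/
noncomputable section

open Finset

variable {E : Type*} [NormedAddCommGroup E] [InnerProductSpace ℂ E] [CompleteSpace E]

/-- `Im{A} = (A - A*)/(2i)`. -/
def imOp (A : E →L[ℂ] E) : E →L[ℂ] E := (2 * Complex.I)⁻¹ • (A - star A)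

/-- An open quantum system `(S, L, H)` with field channels indexed by `ι`: an `ι×ι` matrix
`S` of bounded operators, an `ι`-vector `L` of bounded operators, and an operator `H`. -/
structure QOpen (ι : Type*) (E : Type*) [NormedAddCommGroup E] [InnerProductSpace ℂ E]
    [CompleteSpace E] where
  S : Matrix ι ι (E →L[ℂ] E)
  L : ι → E →L[ℂ] E
  H : E →L[ℂ] E

/-- The scattering matrix of `G` is unitary: `S†S = SS† = I`. -/
def QOpen.unitaryS {ι : Type*} [Fintype ι] [DecidableEq ι] (G : QOpen ι E) : Prop :=
  G.S.conjTranspose * G.S = 1 ∧ G.S * G.S.conjTranspose = 1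

/-- The series product `G₂ ◁ G₁ = (S₂S₁, L₂ + S₂L₁, H₁ + H₂ + Im{L₂†S₂L₁})`. -/
def series {ι : Type*} [Fintype ι] (G₂ G₁ : QOpen ι E) : QOpen ι E where
  S := G₂.S * G₁.S
  L := fun j => G₂.L j + ∑ k, G₂.S j k * G₁.L k
  H := G₁.H + G₂.H + imOp (∑ j, ∑ k, star (G₂.L j) * G₂.S j k * G₁.L k)

/-! The `S`- and `L`-components of the two bracketings agree by associativity of matrix
multiplication and additivity of `*ᵥ`. In the `H`-components the coupling terms differ only in
that one side contains `(S₃L₂)†(S₃S₂)L₁` where the other contains `L₂†S₂L₁`; these are equal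
because `S₃†S₃ = 1`, and `Im` is additive. -/

namespace Matrix

variable {ι R : Type*} [Fintype ι] [DecidableEq ι] [Semiring R] [StarRing R]

theorem star_mulVec_dotProduct_mulVec_of_conjTranspose_mul_self {S : Matrix ι ι R}
    (hS : Sᴴ * S = 1) (v w : ι → R) : star (S *ᵥ v) ⬝ᵥ (S *ᵥ w) = star v ⬝ᵥ w := by
  rw [star_mulVec, ← dotProduct_mulVec, mulVec_mulVec, hS, one_mulVec]

theorem star_add_mulVec_dotProduct_mul_mulVec_add {S₃ : Matrix ι ι R} (hS₃ : S₃ᴴ * S₃ = 1)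
    (S₂ : Matrix ι ι R) (L₁ L₂ L₃ : ι → R) :
    star (L₃ + S₃ *ᵥ L₂) ⬝ᵥ ((S₃ * S₂) *ᵥ L₁) + star L₃ ⬝ᵥ (S₃ *ᵥ L₂) =
      star L₂ ⬝ᵥ (S₂ *ᵥ L₁) + star L₃ ⬝ᵥ (S₃ *ᵥ (L₂ + S₂ *ᵥ L₁)) := by
  rw [star_add, add_dotProduct, ← mulVec_mulVec,
    star_mulVec_dotProduct_mulVec_of_conjTranspose_mul_self hS₃, mulVec_add, dotProduct_add]
  abel

end Matrix

open Matrix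

theorem imOp_add (A B : E →L[ℂ] E) : imOp (A + B) = imOp A + imOp B := by
  rw [imOp, imOp, imOp, star_add, add_sub_add_comm, smul_add]

attribute [ext] QOpen

section series

variable {ι : Type*} [Fintype ι] (G₂ G₁ : QOpen ι E)

theorem series_S : (series G₂ G₁).S = G₂.S * G₁.S := rfl

theorem series_L : (series G₂ G₁).L = G₂.L + G₂.S *ᵥ G₁.L := rfl

theorem series_H : (series G₂ G₁).H = G₁.H + G₂.H + imOp (star G₂.L ⬝ᵥ (G₂.S *ᵥ G₁.L)) := by
  simp only [series, dotProduct, mulVec, Pi.star_apply, mul_sum, mul_assoc]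

end series

theorem stmt_4_general {ι : Type*} [Fintype ι] [DecidableEq ι]
    (G₁ G₂ G₃ : QOpen ι E)
    (hS₃ : G₃.unitaryS) :
    series (series G₃ G₂) G₁ = series G₃ (series G₂ G₁) := by
  ext : 1
  · simp only [series_S, Matrix.mul_assoc]
  · simp only [series_L, series_S, mulVec_add, mulVec_mulVec, add_assoc]
  · have hcoupling := congrArg imOp <|
      star_add_mulVec_dotProduct_mul_mulVec_add hS₃.1 G₂.S G₁.L G₂.L G₃.L
    rw [imOp_add, imOp_add] at hcoupling
    simp only [series_H, series_L, series_S]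
    linear_combination (norm := abel) hcoupling

/-- the series product of open quantum systems is associative:
`(G₃ ◁ G₂) ◁ G₁ = G₃ ◁ (G₂ ◁ G₁)` componentwise as triples, for any three `n`-channel
open quantum systems (unitary scattering matrices, self-adjoint Hamiltonians). -/
theorem stmt_4 {ι : Type*} [Fintype ι] [DecidableEq ι]
    (G₁ G₂ G₃ : QOpen ι E)
    (hS₁ : G₁.unitaryS) (hS₂ : G₂.unitaryS) (hS₃ : G₃.unitaryS)
    (hH₁ : IsSelfAdjoint G₁.H) (hH₂ : IsSelfAdjoint G₂.H) (hH₃ : IsSelfAdjoint G₃.H) :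
    series (series G₃ G₂) G₁ = series G₃ (series G₂ G₁) :=
  stmt_4_general G₁ G₂ G₃ hS₃
end
end

section
/- (Lossless energy rate relation.) Let P = (I, L, H) be an n-channel open quantum system and let W = (R, w, D) be an n-channel open quantum system whose Hamiltonian has the form D = −i Σ_{k=1}^m (K_k* v_k − v_k* K_k) for bounded operators K_k, v_k. Let V₀ be a bounded self-adjoint nonnegative operator satisfying [V₀, H] = 0, [V₀, v_k] = 0 and [V₀, v_k*] = 0 for all k. Then the generator of the series connection P ◁ W satisfies 𝒢_{P◁W}(V₀) = 𝓛_w(V₀) + 𝓛_L(V₀) + Σ_{j=1}^n ( w_j*[V₀, L_j] + [L_j*, V₀]w_j ) + Σ_{k=1}^m ( v_k*[V₀, K_k] + [K_k*, V₀]v_k ). In particular the right-hand side does not depend on the scattering matrix R. -/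
noncomputable section

open Finset

variable {E : Type*} [NormedAddCommGroup E] [InnerProductSpace ℂ E] [CompleteSpace E]

open scoped ComplexOrder

/-- The Lindblad superoperator `𝓛_L(X) = (1/2) Σ_j (L_j* [X, L_j] + [L_j*, X] L_j)`. -/
def lindblad {ι : Type*} [Fintype ι] (L : ι → E →L[ℂ] E) (X : E →L[ℂ] E) : E →L[ℂ] E :=
  (2 : ℂ)⁻¹ • ∑ j, (star (L j) * ⁅X, L j⁆ + ⁅star (L j), X⁆ * L j)

/-- The generator `𝒢_G(X) = −i[X, H] + 𝓛_L(X)` of an open quantum system `G`. -/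
def QOpen.gen {ι : Type*} [Fintype ι] (G : QOpen ι E) (X : E →L[ℂ] E) : E →L[ℂ] E :=
  (-Complex.I) • ⁅X, G.H⁆ + lindblad G.L X

/-!
Because the plant scatters trivially, `P ◁ W` has coupling `L + w` and Hamiltonian
`D + H + Im{L†w}`. Expanding `𝓛_{L+w}(V₀)` gives `𝓛_L(V₀) + 𝓛_w(V₀)` plus cross terms, which
combine with `−i[V₀, Im{L†w}]` to `Σ_j (w_j*[V₀, L_j] + [L_j*, V₀] w_j)`. As `V₀` commutes with
`H`, the plant Hamiltonian drops out, and as it commutes with every `v_k` and `v_k*`,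
`−i[V₀, D] = Σ_k (v_k*[V₀, K_k] + [K_k*, V₀] v_k)`. The scattering matrix `R` never enters.
-/

section CommutatorIdentities

variable {A : Type*} [Ring A]

namespace Ring

theorem lie_add (x y z : A) : ⁅x, y + z⁆ = ⁅x, y⁆ + ⁅x, z⁆ := by
  simp only [lie_def]; noncomm_ring

theorem lie_sum {ι : Type*} (s : Finset ι) (x : A) (f : ι → A) :
    ⁅x, ∑ i ∈ s, f i⁆ = ∑ i ∈ s, ⁅x, f i⁆ := by
  simp only [lie_def, mul_sum, sum_mul, sum_sub_distrib]

theorem lie_smul {R : Type*} [CommSemiring R] [Algebra R A] (x y : A) (c : R) :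
    ⁅x, c • y⁆ = c • ⁅x, y⁆ := by
  simp only [lie_def, mul_smul_comm, smul_mul_assoc, smul_sub]

end Ring

theorem neg_lie_mul_sub_mul_of_lie_eq_zero {x k k' v v' : A} (hv : ⁅x, v⁆ = 0)
    (hv' : ⁅x, v'⁆ = 0) : -⁅x, k' * v - v' * k⁆ = v' * ⁅x, k⁆ + ⁅k', x⁆ * v := by
  simp only [Ring.lie_def, sub_eq_zero] at hv hv' ⊢
  have hv_right : k' * v * x = k' * x * v := by rw [mul_assoc, ← hv, mul_assoc]
  have hv'_left : x * v' * k = v' * x * k := by rw [hv']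
  calc -(x * (k' * v - v' * k) - (k' * v - v' * k) * x)
      = -(x * k' * v) + x * v' * k + k' * v * x - v' * k * x := by noncomm_ring
    _ = v' * (x * k - k * x) + (k' * x - x * k') * v := by
        rw [hv_right, hv'_left]; noncomm_ring

theorem neg_lie_mul_sub_mul_add_cross (x a a' b b' : A) :
    -⁅x, a' * b - b' * a⁆
        + (a' * ⁅x, b⁆ + b' * ⁅x, a⁆ + ⁅a', x⁆ * b + ⁅b', x⁆ * a)
      = (2 : ℕ) • (b' * ⁅x, a⁆ + ⁅a', x⁆ * b) := by
  simp only [Ring.lie_def]; noncomm_ring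

end CommutatorIdentities

section SeriesGenerator

variable {ι : Type*} [Fintype ι]

theorem lindblad_add (L w : ι → E →L[ℂ] E) (X : E →L[ℂ] E) :
    lindblad (L + w) X = lindblad L X + lindblad w X
      + (2 : ℂ)⁻¹ • ∑ j, (star (L j) * ⁅X, w j⁆ + star (w j) * ⁅X, L j⁆
          + ⁅star (L j), X⁆ * w j + ⁅star (w j), X⁆ * L j) := by
  simp only [lindblad, ← smul_add, ← sum_add_distrib]
  congr 1
  refine sum_congr rfl fun j _ => ?_
  simp only [Pi.add_apply, star_add, Ring.lie_def]
  noncomm_ring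

theorem smul_lie_imOp (X A : E →L[ℂ] E) :
    (-Complex.I) • ⁅X, imOp A⁆ = -(2 : ℂ)⁻¹ • ⁅X, A - star A⁆ := by
  rw [imOp, Ring.lie_smul, smul_smul]
  congr 1
  field_simp

theorem gen_series_one_left [DecidableEq ι] (L : ι → E →L[ℂ] E) (Hm : E →L[ℂ] E)
    (G : QOpen ι E) (X : E →L[ℂ] E) :
    (series (QOpen.mk 1 L Hm) G).gen X
      = (-Complex.I) • ⁅X, G.H⁆ + (-Complex.I) • ⁅X, Hm⁆ + lindblad G.L X + lindblad L X
        + ∑ j, (star (G.L j) * ⁅X, L j⁆ + ⁅star (L j), X⁆ * G.L j) := by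
  have hL : (fun j => L j + ∑ k, (1 : Matrix ι ι (E →L[ℂ] E)) j k * G.L k) = L + G.L := by
    ext1 j; simp [Matrix.one_apply]
  have hH : ∑ j, ∑ k, star (L j) * (1 : Matrix ι ι (E →L[ℂ] E)) j k * G.L k
      = ∑ j, star (L j) * G.L j := by
    simp [Matrix.one_apply]
  have hcross : (-Complex.I) • ⁅X, imOp (∑ j, star (L j) * G.L j)⁆
      + (2 : ℂ)⁻¹ • ∑ j, (star (L j) * ⁅X, G.L j⁆ + star (G.L j) * ⁅X, L j⁆
          + ⁅star (L j), X⁆ * G.L j + ⁅star (G.L j), X⁆ * L j)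
      = ∑ j, (star (G.L j) * ⁅X, L j⁆ + ⁅star (L j), X⁆ * G.L j) := by
    rw [smul_lie_imOp, star_sum, ← sum_sub_distrib, Ring.lie_sum, neg_smul, ← smul_neg,
      ← smul_add, ← sum_neg_distrib, ← sum_add_distrib, smul_sum]
    refine sum_congr rfl fun j _ => ?_
    rw [star_mul, star_star, neg_lie_mul_sub_mul_add_cross, ← Nat.cast_smul_eq_nsmul ℂ,
      smul_smul]
    norm_num
  simp only [QOpen.gen, series, hL, hH, lindblad_add, Ring.lie_add, smul_add, ← hcross]
  abel

end SeriesGenerator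

theorem stmt_7_general {ι κ : Type*} [Fintype ι] [DecidableEq ι] [Fintype κ]
    (L : ι → E →L[ℂ] E) (Hm : E →L[ℂ] E)
    (R : Matrix ι ι (E →L[ℂ] E)) (w : ι → E →L[ℂ] E)
    (K v : κ → E →L[ℂ] E)
    (V₀ : E →L[ℂ] E)
    (hVH : ⁅V₀, Hm⁆ = 0)
    (hVv : ∀ k, ⁅V₀, v k⁆ = 0) (hVvs : ∀ k, ⁅V₀, star (v k)⁆ = 0) :
    (series (QOpen.mk (1 : Matrix ι ι (E →L[ℂ] E)) L Hm)
        (QOpen.mk R w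
          ((-Complex.I) • ∑ k, (star (K k) * v k - star (v k) * K k)))).gen V₀
      = lindblad w V₀ + lindblad L V₀
        + (∑ j, (star (w j) * ⁅V₀, L j⁆ + ⁅star (L j), V₀⁆ * w j))
        + ∑ k, (star (v k) * ⁅V₀, K k⁆ + ⁅star (K k), V₀⁆ * v k) := by
  have hD : (-Complex.I) • ⁅V₀, (-Complex.I) • ∑ k, (star (K k) * v k - star (v k) * K k)⁆
      = ∑ k, (star (v k) * ⁅V₀, K k⁆ + ⁅star (K k), V₀⁆ * v k) := by
    rw [Ring.lie_smul, smul_smul, neg_mul_neg, Complex.I_mul_I, neg_one_smul, Ring.lie_sum,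
      ← sum_neg_distrib]
    exact sum_congr rfl fun k _ => neg_lie_mul_sub_mul_of_lie_eq_zero (hVv k) (hVvs k)
  rw [gen_series_one_left, hD, hVH, smul_zero, add_zero]
  abel

/-- lossless energy rate relation: for the plant `P = (I, L, H)` in series
with an exosystem `W = (R, w, D)` whose Hamiltonian is
`D = −i Σ_k (K_k* v_k − v_k* K_k)`, and a nonnegative self-adjoint `V₀` commuting with
`H` and with every `v_k`, `v_k*`, the generator of `P ◁ W` satisfies
`𝒢_{P◁W}(V₀) = 𝓛_w(V₀) + 𝓛_L(V₀) + Σ_j (w_j*[V₀,L_j] + [L_j*,V₀]w_j)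
  + Σ_k (v_k*[V₀,K_k] + [K_k*,V₀]v_k)`.  In particular the right-hand side does not
depend on the scattering matrix `R`. -/
theorem stmt_7 {ι κ : Type*} [Fintype ι] [DecidableEq ι] [Fintype κ]
    (L : ι → E →L[ℂ] E) (Hm : E →L[ℂ] E)
    (R : Matrix ι ι (E →L[ℂ] E)) (w : ι → E →L[ℂ] E)
    (K v : κ → E →L[ℂ] E)
    (hHm : IsSelfAdjoint Hm)
    (hR : (QOpen.mk R w ((-Complex.I) • ∑ k, (star (K k) * v k - star (v k) * K k))).unitaryS)
    (V₀ : E →L[ℂ] E)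
    (hV₀sa : IsSelfAdjoint V₀) (hV₀pos : ∀ ψ : E, 0 ≤ (inner ℂ ψ (V₀ ψ) : ℂ))
    (hVH : ⁅V₀, Hm⁆ = 0)
    (hVv : ∀ k, ⁅V₀, v k⁆ = 0) (hVvs : ∀ k, ⁅V₀, star (v k)⁆ = 0) :
    (series (QOpen.mk (1 : Matrix ι ι (E →L[ℂ] E)) L Hm)
        (QOpen.mk R w
          ((-Complex.I) • ∑ k, (star (K k) * v k - star (v k) * K k)))).gen V₀
      = lindblad w V₀ + lindblad L V₀
        + (∑ j, (star (w j) * ⁅V₀, L j⁆ + ⁅star (L j), V₀⁆ * w j))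
        + ∑ k, (star (v k) * ⁅V₀, K k⁆ + ⁅star (K k), V₀⁆ * v k) :=
  stmt_7_general L Hm R w K v V₀ hVH hVv hVvs
end
end
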